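/- arXiv:2505.20696 — 3 statements merged into one kernel-verified Lean document; each statement's English description precedes it below -/
import Mathlib

section
/- Let A be an n×n real symmetric diagonally dominant matrix with nonnegative diagonal (i.e., a_{ii} ≥ Σ_{j≠i}|a_{ij}| for all i). Decompose the off-diagonal part as P − (−N) where P contains the positive off-diagonal entries, N the negative off-diagonal entries, set D = diag((P − N)𝟙) (row sums of absolute off-diagonal values) and S = diag(a_{ii} − d_{ii}) the diagonal slack. Then the 2n×2n augmented matrix L = [[D + N' + S/2, −(P + S/2)], [−(P + S/2), D + N' + S/2]], where N' denotes the matrix of absolute values of negative off-diagonal entries placed appropriately, is a symmetric matrix with nonpositive off-diagonal entries and zero row sums, i.e., a graph Laplacian. -/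
/-!
Diagonal dominance says exactly that the slack `S` is nonnegative, so the off-diagonal blocks
`-(P + S/2)` are nonpositive. Row `i` of `L` meets one copy of each block, and the two copies of
`S/2` cancel, leaving the row sum of `D + N - P`, which vanishes by the choice of `D`.
-/

open Matrix

namespace Matrix

variable {ι α : Type*}

def IsGraphLaplacian [Fintype ι] [AddCommMonoid α] [LE α] (L : Matrix ι ι α) : Prop :=
  L.IsSymm ∧ (∀ i j, i ≠ j → L i j ≤ 0) ∧ ∀ i, ∑ j, L i j = 0

theorem isGraphLaplacian_fromBlocks [Fintype ι] [AddCommMonoid α] [LE α] {B C : Matrix ι ι α}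
    (hB : B.IsSymm) (hC : C.IsSymm) (hB_offDiag : ∀ i j, i ≠ j → B i j ≤ 0)
    (hC_nonpos : ∀ i j, C i j ≤ 0) (hrow : ∀ i, ∑ j, B i j + ∑ j, C i j = 0) :
    (fromBlocks B C C B).IsGraphLaplacian := by
  refine ⟨hB.fromBlocks hC hB, ?_, ?_⟩
  · rintro (i | i) (j | j) hij
    · exact hB_offDiag i j (by rintro rfl; exact hij rfl)
    · exact hC_nonpos i j
    · exact hC_nonpos i j
    · exact hB_offDiag i j (by rintro rfl; exact hij rfl)
  · rintro (i | i)
    · simpa [Fintype.sum_sum_type] using hrow i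
    · simpa [Fintype.sum_sum_type, add_comm] using hrow i

variable [DecidableEq ι]

section OffDiag

variable [Zero α] [LinearOrder α] (A : Matrix ι ι α)

def offDiagPos : Matrix ι ι α := of fun i j => if i = j then 0 else max (A i j) 0

def offDiagNeg : Matrix ι ι α := of fun i j => if i = j then 0 else min (A i j) 0

theorem offDiagPos_nonneg (i j : ι) : 0 ≤ A.offDiagPos i j := by
  simp only [offDiagPos, of_apply]
  split_ifs <;> simp

theorem offDiagNeg_nonpos (i j : ι) : A.offDiagNeg i j ≤ 0 := by
  simp only [offDiagNeg, of_apply]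
  split_ifs <;> simp

variable {A}

theorem IsSymm.offDiagPos (hA : A.IsSymm) : A.offDiagPos.IsSymm := by
  ext i j
  simp [Matrix.offDiagPos, eq_comm, hA.apply]

theorem IsSymm.offDiagNeg (hA : A.IsSymm) : A.offDiagNeg.IsSymm := by
  ext i j
  simp [Matrix.offDiagNeg, eq_comm, hA.apply]

end OffDiag

theorem sum_offDiagPos_sub_sum_offDiagNeg [Fintype ι] [AddCommGroup α] [LinearOrder α]
    [IsOrderedAddMonoid α] (A : Matrix ι ι α) (i : ι) :
    ∑ j, A.offDiagPos i j - ∑ j, A.offDiagNeg i j = ∑ j ∈ Finset.univ.erase i, |A i j| := by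
  rw [← Finset.sum_sub_distrib, ← Finset.add_sum_erase _ _ (Finset.mem_univ i)]
  simp only [offDiagPos, offDiagNeg, of_apply, if_true, sub_self, zero_add]
  refine Finset.sum_congr rfl fun j hj => ?_
  rw [if_neg (Finset.ne_of_mem_erase hj).symm, if_neg (Finset.ne_of_mem_erase hj).symm,
    max_sub_min_eq_abs', sub_zero]

end Matrix

theorem stmt_4 {n : ℕ} (A : Matrix (Fin n) (Fin n) ℝ)
    (hsym : A.IsSymm)
    (hdd : ∀ i, ∑ j ∈ Finset.univ.erase i, |A i j| ≤ A i i)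
    (P N D S : Matrix (Fin n) (Fin n) ℝ)
    (hP : P = Matrix.of fun i j => if i = j then 0 else max (A i j) 0)
    (hN : N = Matrix.of fun i j => if i = j then 0 else min (A i j) 0)
    (hD : D = Matrix.diagonal fun i => (∑ j, P i j) - (∑ j, N i j))
    (hS : S = Matrix.diagonal fun i => A i i - D i i)
    (L : Matrix (Fin n ⊕ Fin n) (Fin n ⊕ Fin n) ℝ)
    (hL : L = Matrix.fromBlocks (D + N + (1/2 : ℝ) • S) (-(P + (1/2 : ℝ) • S))
                                (-(P + (1/2 : ℝ) • S)) (D + N + (1/2 : ℝ) • S)) :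
    L.IsSymm ∧ (∀ i j, i ≠ j → L i j ≤ 0) ∧ (∀ i, ∑ j, L i j = 0) := by
  obtain rfl : P = A.offDiagPos := hP
  obtain rfl : N = A.offDiagNeg := hN
  have hslack (i) : 0 ≤ A i i - (∑ j, A.offDiagPos i j - ∑ j, A.offDiagNeg i j) := by
    rw [sum_offDiagPos_sub_sum_offDiagNeg]
    exact sub_nonneg.2 (hdd i)
  subst hS hD hL
  apply isGraphLaplacian_fromBlocks
  · exact ((isSymm_diagonal _).add hsym.offDiagNeg).add ((isSymm_diagonal _).smul _)
  · exact (hsym.offDiagPos.add ((isSymm_diagonal _).smul _)).neg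
  · intro i j hij
    simpa [diagonal_apply_ne _ hij] using A.offDiagNeg_nonpos i j
  · intro i j
    rcases eq_or_ne i j with rfl | hij
    · simp only [Matrix.add_apply, Matrix.neg_apply, Matrix.smul_apply, diagonal_apply_eq,
        smul_eq_mul]
      linarith [hslack i, A.offDiagPos_nonneg i i]
    · simpa [diagonal_apply_ne _ hij] using A.offDiagPos_nonneg i j
  · intro i
    simp [Finset.sum_add_distrib, diagonal_apply]
end

section
/- With A symmetric diagonally dominant and L its 2n×2n Laplacian augmentation, if x' = (u, v) ∈ ℝ^{2n} is any solution of L x' = (b, −b), then x = (u − v)/2 solves A x = b. -/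
/-!
Write `M = D + N + S/2` and `K = P + S/2`, so that `L = [[M, -K], [-K, M]]`. Subtracting the
second block row of `L x' = (b, -b)` from the first gives `(M + K) (u - v) = 2 b`, and
`M + K = P + N + (D + S) = A`: the off-diagonal part of `A` is split into `P + N`, and `S` is
chosen so that `D + S` is the diagonal of `A`.
-/

open Matrix

namespace Matrix

variable {R : Type*}

theorem add_mulVec_sub_eq_two_smul_of_fromBlocks_mulVec {m n : Type*} [Fintype n] [Ring R]
    {M K : Matrix m n R} {u v : n → R} {b : m → R}
    (h : fromBlocks M (-K) (-K) M *ᵥ Sum.elim u v = Sum.elim b (-b)) :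
    (M + K) *ᵥ (u - v) = (2 : R) • b := by
  rw [fromBlocks_mulVec] at h
  have top : M *ᵥ u - K *ᵥ v = b := funext fun i => by
    simpa [neg_mulVec, sub_eq_add_neg] using congrFun h (Sum.inl i)
  have bottom : -(K *ᵥ u) + M *ᵥ v = -b := funext fun i => by
    simpa [neg_mulVec] using congrFun h (Sum.inr i)
  calc (M + K) *ᵥ (u - v) = (M *ᵥ u - K *ᵥ v) - (-(K *ᵥ u) + M *ᵥ v) := by
        rw [add_mulVec, mulVec_sub, mulVec_sub]; abel
    _ = (2 : R) • b := by rw [top, bottom, sub_neg_eq_add, two_smul]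

theorem of_posPart_add_of_negPart_add_diagonal {n : Type*} [DecidableEq n] [AddCommGroup R]
    [LinearOrder R] (A : Matrix n n R) :
    (of fun i j => if i = j then 0 else max (A i j) 0) +
        (of fun i j => if i = j then 0 else min (A i j) 0) + diagonal (fun i => A i i) = A := by
  ext i j
  by_cases hij : i = j
  · subst hij
    simp
  · simp [hij, max_add_min]

end Matrix

theorem stmt_6_general {n : ℕ} (A : Matrix (Fin n) (Fin n) ℝ)
    (P N D S : Matrix (Fin n) (Fin n) ℝ)
    (hP : P = Matrix.of fun i j => if i = j then 0 else max (A i j) 0)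
    (hN : N = Matrix.of fun i j => if i = j then 0 else min (A i j) 0)
    (hD : D = Matrix.diagonal fun i => (∑ j, P i j) - (∑ j, N i j))
    (hS : S = Matrix.diagonal fun i => A i i - D i i)
    (L : Matrix (Fin n ⊕ Fin n) (Fin n ⊕ Fin n) ℝ)
    (hL : L = Matrix.fromBlocks (D + N + (1/2 : ℝ) • S) (-(P + (1/2 : ℝ) • S))
                                (-(P + (1/2 : ℝ) • S)) (D + N + (1/2 : ℝ) • S))
    (u v b : Fin n → ℝ) (hx : L *ᵥ (Sum.elim u v) = Sum.elim b (-b)) :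
    A *ᵥ ((1/2 : ℝ) • (u - v)) = b := by
  have hDS : D + S = diagonal fun i => A i i := by
    rw [hS, hD, diagonal_add]
    simp
  have hA : D + N + (1/2 : ℝ) • S + (P + (1/2 : ℝ) • S) = A := by
    rw [← of_posPart_add_of_negPart_add_diagonal A, ← hP, ← hN, ← hDS]
    module
  subst hL
  rw [← hA, mulVec_smul, add_mulVec_sub_eq_two_smul_of_fromBlocks_mulVec hx, smul_smul]
  norm_num

theorem stmt_6 {n : ℕ} (A : Matrix (Fin n) (Fin n) ℝ)
    (hsym : A.IsSymm)
    (hdd : ∀ i, ∑ j ∈ Finset.univ.erase i, |A i j| ≤ A i i)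
    (P N D S : Matrix (Fin n) (Fin n) ℝ)
    (hP : P = Matrix.of fun i j => if i = j then 0 else max (A i j) 0)
    (hN : N = Matrix.of fun i j => if i = j then 0 else min (A i j) 0)
    (hD : D = Matrix.diagonal fun i => (∑ j, P i j) - (∑ j, N i j))
    (hS : S = Matrix.diagonal fun i => A i i - D i i)
    (L : Matrix (Fin n ⊕ Fin n) (Fin n ⊕ Fin n) ℝ)
    (hL : L = Matrix.fromBlocks (D + N + (1/2 : ℝ) • S) (-(P + (1/2 : ℝ) • S))
                                (-(P + (1/2 : ℝ) • S)) (D + N + (1/2 : ℝ) • S))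
    (u v b : Fin n → ℝ) (hx : L *ᵥ (Sum.elim u v) = Sum.elim b (-b)) :
    A *ᵥ ((1/2 : ℝ) • (u - v)) = b :=
  stmt_6_general A P N D S hP hN hD hS L hL u v b hx
end

section
/- Consequently, under the hypotheses above, the spectral condition number of the truncated-Neumann-preconditioned matrix satisfies κ(M_m^{-1} A) = (1 − μ_min^{m+1})/(1 − μ_max^{m+1}) ≤ κ(A), where μ_min ≤ μ_max are the extreme eigenvalues of R = I − A, with equality only in degenerate cases; in particular κ(M_m^{-1}A) is nonincreasing in m. -/
open Matrix

/-!
Since `R = 1 - A`, the geometric series telescopes: `(∑ k < m + 1, R ^ k) * A = 1 - R ^ (m + 1)`,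
a polynomial in `A`, so by the spectral mapping theorem its spectrum is the image of that of `A`
under `x ↦ 1 - (1 - x) ^ (m + 1)`, which is increasing on `x ≤ 1`; the extreme eigenvalues
correspond. Writing `1 - x ^ N = (1 - x) * ∑ k < N, x ^ k`, the ratio
`(1 - a ^ N) / (1 - b ^ N)` decreases in `N` for `0 ≤ a ≤ b < 1` because
`a ^ N * ∑ k < N, b ^ k ≤ b ^ N * ∑ k < N, a ^ k` termwise; at `N = 1` it is `κ(A)`.
-/

open Polynomial in
theorem spectrum_aeval_eq_image {R A : Type*} {p : A → Prop} [CommSemiring R] [StarRing R]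
    [MetricSpace R] [IsTopologicalSemiring R] [ContinuousStar R] [TopologicalSpace A] [Ring A]
    [StarRing A] [Algebra R A] [ContinuousFunctionalCalculus R A p] (q : R[X]) {a : A}
    (ha : p a) : spectrum R (aeval a q) = (fun x => q.eval x) '' spectrum R a := by
  rw [← cfc_polynomial q a]
  exact cfc_map_spectrum _ a

theorem geom_sum_one_sub_mul {R : Type*} [Ring R] (x : R) (N : ℕ) :
    (∑ k ∈ Finset.range N, (1 - x) ^ k) * x = 1 - (1 - x) ^ N := by
  simpa only [sub_sub_cancel] using geom_sum_mul_neg (1 - x) N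

theorem IsSelfAdjoint.spectrum_one_sub_one_sub_pow {A : Type*} [TopologicalSpace A] [Ring A]
    [StarRing A] [Algebra ℝ A] [ContinuousFunctionalCalculus ℝ A IsSelfAdjoint] {a : A}
    (ha : IsSelfAdjoint a) (N : ℕ) :
    spectrum ℝ (1 - (1 - a) ^ N) = (fun x => 1 - (1 - x) ^ N) '' spectrum ℝ a := by
  convert spectrum_aeval_eq_image (R := ℝ) (1 - (1 - Polynomial.X) ^ N) ha using 2
  all_goals simp

theorem monotoneOn_one_sub_one_sub_pow (N : ℕ) :
    MonotoneOn (fun x : ℝ => 1 - (1 - x) ^ N) (Set.Iic 1) :=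
  fun x _ y hy hxy => sub_le_sub_left (pow_le_pow_left₀ (sub_nonneg.2 hy) (by linarith) N) 1

section OrderedRing

variable {𝕜 : Type*} [CommRing 𝕜] [LinearOrder 𝕜] [IsStrictOrderedRing 𝕜]

theorem pow_mul_geom_sum_le_pow_mul_geom_sum {a b : 𝕜} (ha : 0 ≤ a) (hab : a ≤ b) (N : ℕ) :
    a ^ N * ∑ k ∈ Finset.range N, b ^ k ≤ b ^ N * ∑ k ∈ Finset.range N, a ^ k := by
  have hb0 : 0 ≤ b := ha.trans hab
  rw [Finset.mul_sum, Finset.mul_sum]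
  refine Finset.sum_le_sum fun k hk => ?_
  obtain ⟨j, rfl⟩ := Nat.exists_eq_add_of_lt (Finset.mem_range.1 hk)
  calc a ^ (k + j + 1) * b ^ k = (a ^ k * b ^ k) * a ^ (j + 1) := by ring
    _ ≤ (a ^ k * b ^ k) * b ^ (j + 1) := by gcongr
    _ = b ^ (k + j + 1) * a ^ k := by ring

theorem geom_sum_succ_mul_geom_sum_le {a b : 𝕜} (ha : 0 ≤ a) (hab : a ≤ b) (N : ℕ) :
    (∑ k ∈ Finset.range (N + 1), a ^ k) * ∑ k ∈ Finset.range N, b ^ k ≤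
      (∑ k ∈ Finset.range N, a ^ k) * ∑ k ∈ Finset.range (N + 1), b ^ k := by
  rw [Finset.sum_range_succ, Finset.sum_range_succ]
  linarith [pow_mul_geom_sum_le_pow_mul_geom_sum ha hab N]

end OrderedRing

theorem antitone_one_sub_pow_div_one_sub_pow {𝕜 : Type*} [Field 𝕜] [LinearOrder 𝕜]
    [IsStrictOrderedRing 𝕜] {a b : 𝕜} (ha : 0 ≤ a) (hab : a ≤ b) (hb : b < 1) :
    Antitone fun m : ℕ => (1 - a ^ (m + 1)) / (1 - b ^ (m + 1)) := by
  have hb0 : 0 ≤ b := ha.trans hab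
  have hpos : ∀ N ≠ 0, 0 < 1 - b ^ N := fun N hN => sub_pos.2 (pow_lt_one₀ hb0 hb hN)
  refine antitone_nat_of_succ_le fun m => ?_
  rw [div_le_div_iff₀ (hpos _ (by omega)) (hpos _ (by omega)), ← mul_neg_geom_sum a,
    ← mul_neg_geom_sum a, ← mul_neg_geom_sum b, ← mul_neg_geom_sum b]
  have key := mul_le_mul_of_nonneg_left (geom_sum_succ_mul_geom_sum_le ha hab (m + 1))
    (mul_nonneg (sub_nonneg.2 (hab.trans hb.le)) (sub_nonneg.2 hb.le))
  linarith

theorem stmt_16 {n : ℕ} (A : Matrix (Fin n) (Fin n) ℝ)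
    (hA : A.IsHermitian)
    (hspec : ∀ i, hA.eigenvalues i ∈ Set.Ioo (0 : ℝ) 1)
    (R : Matrix (Fin n) (Fin n) ℝ) (hR : R = 1 - A)
    (lammin lammax mumin mumax : ℝ)
    (hmin : IsLeast (spectrum ℝ A) lammin) (hmax : IsGreatest (spectrum ℝ A) lammax)
    (hmumin : mumin = 1 - lammax) (hmumax : mumax = 1 - lammin) :
    (∀ m : ℕ,
      IsGreatest (spectrum ℝ ((∑ k ∈ Finset.range (m + 1), R ^ k) * A))
        (1 - mumin ^ (m + 1)) ∧
      IsLeast (spectrum ℝ ((∑ k ∈ Finset.range (m + 1), R ^ k) * A))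
        (1 - mumax ^ (m + 1)) ∧
      (1 - mumin ^ (m + 1)) / (1 - mumax ^ (m + 1)) ≤ lammax / lammin) ∧
    Antitone (fun m : ℕ => (1 - mumin ^ (m + 1)) / (1 - mumax ^ (m + 1))) := by
  have hspecA : spectrum ℝ A ⊆ Set.Ioo 0 1 := by
    rw [hA.spectrum_real_eq_range_eigenvalues]
    exact Set.range_subset_iff.2 hspec
  have hlammin := hspecA hmin.1
  have hlammax := hspecA hmax.1
  have hle : lammin ≤ lammax := hmin.2 hmax.1
  subst hR hmumin hmumax
  have hanti := antitone_one_sub_pow_div_one_sub_pow (a := 1 - lammax) (b := 1 - lammin)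
    (by linarith [hlammax.2]) (by linarith) (by linarith [hlammin.1])
  have hmono m := (monotoneOn_one_sub_one_sub_pow (m + 1)).mono
    fun x hx => (hspecA hx).2.le
  refine ⟨fun m => ⟨?_, ?_, ?_⟩, hanti⟩
  · rw [geom_sum_one_sub_mul, hA.isSelfAdjoint.spectrum_one_sub_one_sub_pow]
    exact (hmono m).map_isGreatest hmax
  · rw [geom_sum_one_sub_mul, hA.isSelfAdjoint.spectrum_one_sub_one_sub_pow]
    exact (hmono m).map_isLeast hmin
  · simpa using hanti (Nat.zero_le m)
end
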